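/- The linear map U₂: ℤ⁴ → ℤ⁴ given by the matrix with rows (1, 0, 0, 0), (0, 0, 0, 1), (2, 0, −1, 2), (0, 1, −1, 0) is unimodular (its determinant has absolute value 1), and U₂ maps the set {g₁, g₂, g₃, g₄, g₅, g₆, g₇} bijectively onto the set H₂ = {g₂, g₄, g₃−g₂, g₃−g₁, g₆−g₁, g₆−g₇, (1,0,1,0)}. -/
import Mathlib


/-- The seven lattice points `g₁, …, g₇` (0-indexed as `g 0, …, g 6`). -/
def g : Fin 7 → (Fin 4 → ℤ) :=
  ![![1,0,0,0], ![0,1,0,0], ![1,1,2,0], ![0,0,0,1],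
    ![0,2,2,1], ![1,1,1,0], ![0,1,1,1]]

/-- The matrix `U₂` (acting on column vectors). -/
def U₂ : Matrix (Fin 4) (Fin 4) ℤ :=
  !![1, 0, 0, 0;
     0, 0, 0, 1;
     2, 0, -1, 2;
     0, 1, -1, 0]

/-- The seven-element set `H₂`. -/
def H₂ : Set (Fin 4 → ℤ) :=
  {g 1, g 3, g 2 - g 1, g 2 - g 0, g 5 - g 0, g 5 - g 6, ![1,0,1,0]}

lemma e0 : U₂.mulVec (g 0) = ![1,0,2,0] := by decide
lemma e1 : U₂.mulVec (g 1) = ![0,0,0,1] := by decide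
lemma e2 : U₂.mulVec (g 2) = ![1,0,0,-1] := by decide
lemma e3 : U₂.mulVec (g 3) = ![0,1,2,0] := by decide
lemma e4 : U₂.mulVec (g 4) = ![0,1,0,0] := by decide
lemma e5 : U₂.mulVec (g 5) = ![1,0,1,0] := by decide
lemma e6 : U₂.mulVec (g 6) = ![0,1,1,0] := by decide

lemma hH : H₂ = ({![0,1,0,0], ![0,0,0,1], ![1,0,2,0], ![0,1,2,0],
    ![0,1,1,0], ![1,0,0,-1], ![1,0,1,0]} : Set (Fin 4 → ℤ)) := by
  have h2 : g 2 - g 1 = ![1,0,2,0] := by decide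
  have h3 : g 2 - g 0 = ![0,1,2,0] := by decide
  have h4 : g 5 - g 0 = ![0,1,1,0] := by decide
  have h5 : g 5 - g 6 = ![1,0,0,-1] := by decide
  have h0 : g 1 = ![0,1,0,0] := by decide
  have h1 : g 3 = ![0,0,0,1] := by decide
  unfold H₂
  rw [h2, h3, h4, h5, h0, h1]

/-- `U₂` is unimodular and maps `{g₁, …, g₇}` bijectively onto `H₂`. -/
theorem stmt_12 :
    |U₂.det| = 1 ∧
    Set.BijOn (fun v => U₂.mulVec v)
      ({g 0, g 1, g 2, g 3, g 4, g 5, g 6} : Set (Fin 4 → ℤ)) H₂ := by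
  constructor
  · decide
  · have hinj : Set.InjOn (fun v => U₂.mulVec v)
        ({g 0, g 1, g 2, g 3, g 4, g 5, g 6} : Set (Fin 4 → ℤ)) := by
      intro x hx y hy h
      simp only [Set.mem_insert_iff, Set.mem_singleton_iff] at hx hy
      rcases hx with rfl|rfl|rfl|rfl|rfl|rfl|rfl <;>
        rcases hy with rfl|rfl|rfl|rfl|rfl|rfl|rfl <;>
        simp only [e0, e1, e2, e3, e4, e5, e6] at h <;>
        first
          | rfl
          | exact absurd h (by decide)
    have himg : (fun v => U₂.mulVec v) ''
        ({g 0, g 1, g 2, g 3, g 4, g 5, g 6} : Set (Fin 4 → ℤ)) = H₂ := by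
      rw [hH]
      simp only [Set.image_insert_eq, Set.image_singleton, e0, e1, e2, e3, e4, e5, e6]
      ext x
      simp only [Set.mem_insert_iff, Set.mem_singleton_iff]
      tauto
    exact himg ▸ hinj.bijOn_image
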